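/- Let Σ be a positive definite symmetric n×n real matrix and let μ be the centered Gaussian measure N(0,Σ) on ℝ^n. Let g : ℝ^n → [0,∞] be measurable and symmetric, i.e. g(−x) = g(x) for all x. Then for every y ∈ ℝ^n, ∫ g(x+y) μ(dx) ≥ exp(−½ yᵀΣ⁻¹y) · ∫ g(x) μ(dx). -/

import Mathlib

/-!
Write `ρ` for the Gaussian density and `Q x = xᵀ Σ⁻¹ x`. Translating by `y` gives
`∫ g(x+y) dμ = ∫ ρ(x-y) g(x) dx`, and since `g` and `ρ` are even this also equals
`∫ ρ(x+y) g(x) dx`. Averaging the two expressions, it suffices that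
`½ (ρ(x-y) + ρ(x+y)) ≥ exp(-½ Q y) ρ(x)`, which is AM–GM for the two exponentials combined
with the parallelogram law `Q(x-y) + Q(x+y) = 2 Q x + 2 Q y`.
-/

open MeasureTheory Matrix

noncomputable section

/-- The multivariate Gaussian measure `N(0,Σ)` on `ℝ^n` for a positive definite covariance
matrix `Σ`, given by its Lebesgue density
`(2π)^{-n/2} (det Σ)^{-1/2} exp(-½ xᵀ Σ⁻¹ x)`. -/
def multivariateGaussianN (n : ℕ) (S : Matrix (Fin n) (Fin n) ℝ) : Measure (Fin n → ℝ) :=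
  volume.withDensity fun x =>
    ENNReal.ofReal ((2 * Real.pi) ^ (-(n : ℝ) / 2) * S.det ^ (-(1 : ℝ) / 2) *
      Real.exp (-(1 / 2) * (x ⬝ᵥ S⁻¹ *ᵥ x)))

theorem Real.two_mul_exp_add_div_two_le_exp_add_exp (a b : ℝ) :
    2 * Real.exp ((a + b) / 2) ≤ Real.exp a + Real.exp b := by
  have h_sq (t : ℝ) : Real.exp t = Real.exp (t / 2) ^ 2 := by rw [sq, ← Real.exp_add, add_halves]
  rw [add_div, Real.exp_add, h_sq a, h_sq b, ← mul_assoc]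
  exact two_mul_le_add_sq _ _

namespace Matrix

variable {ι R : Type*} [Fintype ι] [CommRing R]

theorem neg_dotProduct_mulVec_neg (A : Matrix ι ι R) (x : ι → R) :
    -x ⬝ᵥ A *ᵥ -x = x ⬝ᵥ A *ᵥ x := by
  rw [mulVec_neg, dotProduct_neg, neg_dotProduct, neg_neg]

theorem parallelogram_law_dotProduct_mulVec (A : Matrix ι ι R) (x y : ι → R) :
    (x - y) ⬝ᵥ A *ᵥ (x - y) + (x + y) ⬝ᵥ A *ᵥ (x + y) =
      2 * (x ⬝ᵥ A *ᵥ x) + 2 * (y ⬝ᵥ A *ᵥ y) := by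
  simp only [mulVec_sub, mulVec_add, dotProduct_sub, dotProduct_add, sub_dotProduct,
    add_dotProduct]
  ring

end Matrix

namespace MeasureTheory

variable {G : Type*} [MeasurableSpace G] [AddCommGroup G] [MeasurableAdd G]
  {μ : Measure G} [μ.IsAddRightInvariant] {ρ g : G → ENNReal}

theorem lintegral_withDensity_comp_add (hρ : Measurable ρ) (hg : Measurable g) (y : G) :
    ∫⁻ x, g (x + y) ∂μ.withDensity ρ = ∫⁻ x, ρ (x - y) * g x ∂μ := by
  rw [lintegral_withDensity_eq_lintegral_mul _ hρ (g := fun x ↦ g (x + y))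
      (hg.comp (measurable_add_const y)),
    ← lintegral_add_right_eq_self (fun x ↦ ρ (x - y) * g x) y]
  simp

theorem lintegral_withDensity_comp_add_of_even [MeasurableNeg G] [μ.IsNegInvariant]
    (hρ : Measurable ρ) (hg : Measurable g) (hρ_even : ∀ x, ρ (-x) = ρ x)
    (hg_even : ∀ x, g (-x) = g x) (y : G) :
    ∫⁻ x, g (x + y) ∂μ.withDensity ρ = ∫⁻ x, ρ (x + y) * g x ∂μ := by
  rw [lintegral_withDensity_comp_add hρ hg, ← lintegral_neg_eq_self]
  simp_rw [hg_even, ← neg_add', hρ_even]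

theorem mul_lintegral_withDensity_le_lintegral_comp_add [MeasurableNeg G] [μ.IsNegInvariant]
    (hρ : Measurable ρ) (hg : Measurable g) (hρ_even : ∀ x, ρ (-x) = ρ x)
    (hg_even : ∀ x, g (-x) = g x) {k : ENNReal} {y : G} (hk : ∀ x, 2 * k * ρ x ≤ ρ (x - y) + ρ (x + y)) :
    k * ∫⁻ x, g x ∂μ.withDensity ρ ≤ ∫⁻ x, g (x + y) ∂μ.withDensity ρ := by
  have h_twice : 2 * (k * ∫⁻ x, g x ∂μ.withDensity ρ) ≤ 2 * ∫⁻ x, g (x + y) ∂μ.withDensity ρ :=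
    calc 2 * (k * ∫⁻ x, g x ∂μ.withDensity ρ) = ∫⁻ x, 2 * k * ρ x * g x ∂μ := by
          rw [lintegral_withDensity_eq_lintegral_mul _ hρ hg, ← mul_assoc,
            ← lintegral_const_mul _ (hρ.mul hg)]
          simp only [Pi.mul_apply, mul_assoc]
      _ ≤ ∫⁻ x, (ρ (x - y) + ρ (x + y)) * g x ∂μ := by gcongr with x; exact hk x
      _ = ∫⁻ x, ρ (x - y) * g x ∂μ + ∫⁻ x, ρ (x + y) * g x ∂μ := by
          simp only [add_mul]
          exact lintegral_add_left ((hρ.comp (measurable_sub_const y)).mul hg) _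
      _ = 2 * ∫⁻ x, g (x + y) ∂μ.withDensity ρ := by
          rw [← lintegral_withDensity_comp_add hρ hg,
            ← lintegral_withDensity_comp_add_of_even hρ hg hρ_even hg_even, two_mul]
  exact (ENNReal.mul_le_mul_iff_right two_ne_zero ENNReal.ofNat_ne_top).mp h_twice

end MeasureTheory

/-- Lower bound for Gaussian integrals of symmetric functions under translation
(a consequence of the Cameron–Martin formula): for `μ = N(0,Σ)` with `Σ` positive definite
symmetric and `g ≥ 0` symmetric,
`∫ g(x+y) μ(dx) ≥ exp(-½ yᵀ Σ⁻¹ y) ∫ g(x) μ(dx)`. -/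
theorem gaussian_translate_symm_lower_bound
    (n : ℕ) (S : Matrix (Fin n) (Fin n) ℝ) (hS : S.PosDef)
    (g : (Fin n → ℝ) → ENNReal) (hg : Measurable g) (hsym : ∀ x, g (-x) = g x)
    (y : Fin n → ℝ) :
    ENNReal.ofReal (Real.exp (-(1 / 2) * (y ⬝ᵥ S⁻¹ *ᵥ y))) *
        ∫⁻ x, g x ∂(multivariateGaussianN n S) ≤
      ∫⁻ x, g (x + y) ∂(multivariateGaussianN n S) := by
  refine mul_lintegral_withDensity_le_lintegral_comp_add (by fun_prop) hg
    (fun x ↦ by simp only [neg_dotProduct_mulVec_neg]) hsym fun x ↦ ?_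
  have h_pointwise :
      2 * Real.exp (-(1 / 2) * (y ⬝ᵥ S⁻¹ *ᵥ y)) * Real.exp (-(1 / 2) * (x ⬝ᵥ S⁻¹ *ᵥ x)) ≤
      Real.exp (-(1 / 2) * ((x - y) ⬝ᵥ S⁻¹ *ᵥ (x - y))) +
        Real.exp (-(1 / 2) * ((x + y) ⬝ᵥ S⁻¹ *ᵥ (x + y))) := by
    convert Real.two_mul_exp_add_div_two_le_exp_add_exp _ _ using 1
    rw [mul_assoc, ← Real.exp_add]
    congr 2
    linarith [parallelogram_law_dotProduct_mulVec S⁻¹ x y]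
  rw [← ENNReal.ofReal_ofNat, ← ENNReal.ofReal_mul zero_le_two,
    ← ENNReal.ofReal_mul (by positivity)]
  refine (ENNReal.ofReal_le_ofReal ?_).trans ENNReal.ofReal_add_le
  set c : ℝ := (2 * Real.pi) ^ (-(n : ℝ) / 2) * S.det ^ (-(1 : ℝ) / 2)
  have hc : 0 ≤ c := by have := hS.det_pos; positivity
  linarith [mul_le_mul_of_nonneg_left h_pointwise hc]

end
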